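/- Effective-rank bound for the NCT estimator (display (8) of the paper). Assume the sub-Weibull noise assumption with parameters σ > 0 and α ∈ (0,2]. Fix δ ∈ (0,1) and take the threshold τ = σρ with ρ = (2/√n)(log(2r/δ))^{1/α}. Then there is an absolute constant C such that, with probability at least 1 − δ, the NCT estimator β̂ satisfies MSE(β̂) ≤ C · σ · ‖Σ̂‖^{1/2} · ‖β‖₂ · √( r_eff[Σ̂] · (log(2r/δ))^{2/α} / n ), where r_eff[Σ̂] = Tr(Σ̂)/‖Σ̂‖ is the effective rank and ‖·‖ denotes the spectral norm. -/

import Mathlib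

/-!
In the eigenbasis of `Σ̂` the NCT estimator thresholds each canonical coordinate separately: the
`j`-th statistic is `θⱼ + Wⱼ / √n`, where `Wⱼ = wⱼᵀ ε` for the unit vector `wⱼ` obtained by
normalising the `j`-th column of `X Û`, and `MSE(β̂) = ∑ⱼ (SOFT_τ(θⱼ + Wⱼ / √n) − θⱼ)²`.
With `τ = σρ`, a union bound over the `r` sub-Weibull tails gives `|Wⱼ| ≤ τ √n` for all `j` with
probability at least `1 − δ`. On that event each summand is at most `4 τ |θⱼ|` (soft thresholding
errs by at most `2τ`, and by at most `2|θⱼ|`), and Cauchy–Schwarz with Bessel's inequality gives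
`∑ⱼ |θⱼ| ≤ √(Tr Σ̂) ‖β‖₂`; this is the bound with `C = 8`.
-/

open MeasureTheory Matrix Finset

noncomputable def soft (τ z : ℝ) : ℝ := z * max (1 - τ / |z|) 0

lemma soft_of_abs_le {τ z : ℝ} (h : |z| ≤ τ) : soft τ z = 0 := by
  rcases eq_or_ne z 0 with rfl | hz
  · simp [soft]
  · rw [soft, max_eq_right, mul_zero]
    rwa [sub_nonpos, one_le_div (abs_pos.2 hz)]

lemma abs_soft {τ z : ℝ} (hτ : 0 ≤ τ) : |soft τ z| = max (|z| - τ) 0 := by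
  rcases le_or_gt |z| τ with h | h
  · rw [soft_of_abs_le h, abs_zero, max_eq_right (by linarith)]
  · have hz : 0 < |z| := hτ.trans_lt h
    rw [soft, abs_mul, abs_of_nonneg (le_max_right (1 - τ / |z|) 0), mul_max_of_nonneg _ _ hz.le,
      mul_sub, mul_one, mul_div_cancel₀ _ hz.ne', mul_zero]

lemma abs_soft_sub_self_le {τ z : ℝ} (hτ : 0 ≤ τ) : |soft τ z - z| ≤ τ := by
  rcases le_or_gt |z| τ with h | h
  · rwa [soft_of_abs_le h, zero_sub, abs_neg]
  · have hz : 0 < |z| := hτ.trans_lt h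
    have : soft τ z - z = -(τ / |z|) * z := by
      rw [soft, max_eq_left (by rw [sub_nonneg, div_le_one hz]; exact h.le)]; ring
    rw [this, abs_mul, abs_neg, abs_div, abs_abs, abs_of_nonneg hτ, div_mul_cancel₀ _ hz.ne']

lemma sq_soft_sub_le {τ z θ : ℝ} (hτ : 0 ≤ τ) (h : |z - θ| ≤ τ) :
    (soft τ z - θ) ^ 2 ≤ 4 * τ * |θ| := by
  have h_two_τ : |soft τ z - θ| ≤ 2 * τ :=
    calc |soft τ z - θ| ≤ |soft τ z - z| + |z - θ| := abs_sub_le _ _ _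
      _ ≤ 2 * τ := by linarith [abs_soft_sub_self_le (z := z) hτ]
  have h_two_θ : |soft τ z - θ| ≤ 2 * |θ| :=
    calc |soft τ z - θ| ≤ |soft τ z| + |θ| := abs_sub _ _
      _ ≤ 2 * |θ| := by
        rw [abs_soft hτ]
        have hzθ : |z| - τ ≤ |θ| := by linarith [abs_sub_abs_le_abs_sub z θ]
        linarith [max_le hzθ (abs_nonneg θ)]
  rw [← sq_abs]
  nlinarith [abs_nonneg (soft τ z - θ)]

lemma mul_sq_inv_sqrt_mul_sub {l : ℝ} (hl : 0 < l) (s b : ℝ) :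
    l * ((√l)⁻¹ * s - b) ^ 2 = (s - √l * b) ^ 2 := by
  have hsl : 0 < √l := Real.sqrt_pos.2 hl
  field_simp
  rw [Real.sq_sqrt hl.le]

section CanonicalCoordinates

variable {m d r : Type*} [Fintype m] [Fintype d] [Fintype r] [DecidableEq r]
  {U : Matrix d r ℝ} {lam : r → ℝ}

lemma transpose_mulVec_mulVec_of_transpose_mul_self (hU : Uᵀ * U = 1) (v : r → ℝ) :
    Uᵀ *ᵥ (U *ᵥ v) = v := by
  rw [mulVec_mulVec, hU, one_mulVec]

lemma dotProduct_conj_diagonal_mulVec (U : Matrix d r ℝ) (lam : r → ℝ) (x : d → ℝ) :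
    x ⬝ᵥ ((U * diagonal lam * Uᵀ) *ᵥ x) = ∑ j, lam j * (Uᵀ *ᵥ x) j ^ 2 := by
  rw [← mulVec_mulVec, ← mulVec_mulVec, dotProduct_mulVec, ← mulVec_transpose]
  simp only [dotProduct, mulVec_diagonal]
  exact sum_congr rfl fun j _ => by ring

lemma sum_sq_transpose_mulVec_le (hU : Uᵀ * U = 1) (β : d → ℝ) :
    ∑ j, (Uᵀ *ᵥ β) j ^ 2 ≤ ∑ i, β i ^ 2 := by
  set b := Uᵀ *ᵥ β
  have hβ : β ⬝ᵥ (U *ᵥ b) = b ⬝ᵥ b := by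
    rw [dotProduct_mulVec, ← mulVec_transpose]
  have hUb : (U *ᵥ b) ⬝ᵥ (U *ᵥ b) = b ⬝ᵥ b := by
    rw [dotProduct_mulVec, ← mulVec_transpose, transpose_mulVec_mulVec_of_transpose_mul_self hU]
  have h := dotProduct_self_star_nonneg (β - U *ᵥ b)
  simp only [star_trivial, sub_dotProduct, dotProduct_sub, hβ, hUb, dotProduct_comm (U *ᵥ b) β] at h
  simp only [dotProduct, ← sq] at h
  linarith

lemma trace_conj_diagonal (hU : Uᵀ * U = 1) : trace (U * diagonal lam * Uᵀ) = ∑ j, lam j := by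
  rw [trace_mul_cycle, hU, one_mul, trace_diagonal]

variable {X : Matrix m d ℝ} {c : ℝ}

lemma transpose_mul_gram (hU : Uᵀ * U = 1) (hc : c ≠ 0)
    (hS : c⁻¹ • (Xᵀ * X) = U * diagonal lam * Uᵀ) :
    Uᵀ * (Xᵀ * X) = c • (diagonal lam * Uᵀ) := by
  rw [← smul_inv_smul₀ hc (Xᵀ * X), hS, Matrix.mul_smul, ← Matrix.mul_assoc, ← Matrix.mul_assoc, hU,
    Matrix.one_mul]

lemma sum_sq_mul_apply (hU : Uᵀ * U = 1) (hc : c ≠ 0)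
    (hS : c⁻¹ • (Xᵀ * X) = U * diagonal lam * Uᵀ) (j : r) :
    ∑ i, (X * U) i j ^ 2 = c * lam j := by
  have h : (X * U)ᵀ * (X * U) = c • diagonal lam := by
    rw [transpose_mul, Matrix.mul_assoc, ← Matrix.mul_assoc Xᵀ, ← Matrix.mul_assoc,
      transpose_mul_gram hU hc hS, smul_mul, Matrix.mul_assoc, hU, Matrix.mul_one]
  simpa [mul_apply, sq, mul_comm] using congrFun (congrFun h j) j

lemma transpose_mulVec_gram_mulVec (hU : Uᵀ * U = 1) (hc : c ≠ 0)
    (hS : c⁻¹ • (Xᵀ * X) = U * diagonal lam * Uᵀ) (β : d → ℝ) (e : m → ℝ) (j : r) :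
    (Uᵀ *ᵥ (Xᵀ *ᵥ (X *ᵥ β + e))) j = c * (lam j * (Uᵀ *ᵥ β) j) + ∑ i, (X * U) i j * e i := by
  have hsignal : Uᵀ *ᵥ (Xᵀ *ᵥ (X *ᵥ β)) = c • (diagonal lam *ᵥ (Uᵀ *ᵥ β)) := by
    rw [mulVec_mulVec, mulVec_mulVec, Matrix.mul_assoc, transpose_mul_gram hU hc hS, smul_mulVec,
      mulVec_mulVec]
  have hnoise : Uᵀ *ᵥ (Xᵀ *ᵥ e) = (X * U)ᵀ *ᵥ e := by
    rw [mulVec_mulVec, transpose_mul]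
  rw [mulVec_add, mulVec_add, hsignal, hnoise]
  simp only [Pi.add_apply, Pi.smul_apply, smul_eq_mul, mulVec_diagonal]
  simp only [mulVec, dotProduct, transpose_apply]

noncomputable def whitenedColumn (X : Matrix m d ℝ) (U : Matrix d r ℝ) (c : ℝ) (lam : r → ℝ)
    (j : r) : m → ℝ :=
  fun i => (X * U) i j / √(c * lam j)

lemma sum_whitenedColumn_sq (hU : Uᵀ * U = 1) (hc : 0 < c)
    (hS : c⁻¹ • (Xᵀ * X) = U * diagonal lam * Uᵀ) {j : r} (hj : 0 < lam j) :
    ∑ i, whitenedColumn X U c lam j i ^ 2 = 1 := by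
  have hcj : 0 < c * lam j := mul_pos hc hj
  simp only [whitenedColumn, div_pow, Real.sq_sqrt hcj.le, ← sum_div,
    sum_sq_mul_apply hU hc.ne' hS, div_self hcj.ne']

lemma nct_statistic_eq (hU : Uᵀ * U = 1) (hc : 0 < c)
    (hS : c⁻¹ • (Xᵀ * X) = U * diagonal lam * Uᵀ) {j : r} (hj : 0 < lam j)
    (β : d → ℝ) (e : m → ℝ) :
    (√(lam j))⁻¹ * (Uᵀ *ᵥ (Xᵀ *ᵥ (X *ᵥ β + e))) j / c
      = √(lam j) * (Uᵀ *ᵥ β) j + (whitenedColumn X U c lam j ⬝ᵥ e) / √c := by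
  have hnoise : ∑ i, (X * U) i j * e i = √(c * lam j) * (whitenedColumn X U c lam j ⬝ᵥ e) := by
    have : √(c * lam j) ≠ 0 := (Real.sqrt_pos.2 (mul_pos hc hj)).ne'
    simp only [whitenedColumn, dotProduct, mul_sum]
    exact sum_congr rfl fun i _ => by field_simp
  rw [transpose_mulVec_gram_mulVec hU hc.ne' hS, hnoise, Real.sqrt_mul hc.le]
  have hsc : 0 < √c := Real.sqrt_pos.2 hc
  have hsl : 0 < √(lam j) := Real.sqrt_pos.2 hj
  field_simp
  linear_combination (√(lam j) * (whitenedColumn X U c lam j ⬝ᵥ e)) * Real.mul_self_sqrt hc.le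
    - (c * (Uᵀ *ᵥ β) j * √c) * Real.mul_self_sqrt hj.le

/-- The paper's `Û Λ̂⁻¹ SOFT_τ(Λ̂⁻¹ Ûᵀ Xᵀ Y / n)` with `Λ̂ = diagonal (√lam)` and `c` in place of `n`. -/
noncomputable def nctEstimator (X : Matrix m d ℝ) (U : Matrix d r ℝ) (lam : r → ℝ) (c τ : ℝ)
    (Y : m → ℝ) : d → ℝ :=
  U *ᵥ fun j => (√(lam j))⁻¹ * soft τ ((√(lam j))⁻¹ * (Uᵀ *ᵥ (Xᵀ *ᵥ Y)) j / c)

lemma mse_nctEstimator_le (hU : Uᵀ * U = 1) (hc : 0 < c) (hlam : ∀ j, 0 < lam j)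
    (hS : c⁻¹ • (Xᵀ * X) = U * diagonal lam * Uᵀ) {τ : ℝ} (hτ : 0 ≤ τ) {β : d → ℝ} {e : m → ℝ}
    (he : ∀ j, |whitenedColumn X U c lam j ⬝ᵥ e| ≤ τ * √c) :
    let b := nctEstimator X U lam c τ (X *ᵥ β + e)
    (b - β) ⬝ᵥ ((c⁻¹ • (Xᵀ * X)) *ᵥ (b - β)) ≤ 4 * τ * (√(∑ j, lam j) * √(∑ i, β i ^ 2)) := by
  intro b
  set θ : r → ℝ := fun j => √(lam j) * (Uᵀ *ᵥ β) j
  have hcoord : Uᵀ *ᵥ (b - β) = fun j =>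
      (√(lam j))⁻¹ * soft τ ((√(lam j))⁻¹ * (Uᵀ *ᵥ (Xᵀ *ᵥ (X *ᵥ β + e))) j / c) - (Uᵀ *ᵥ β) j := by
    rw [mulVec_sub, show b = U *ᵥ _ from rfl, transpose_mulVec_mulVec_of_transpose_mul_self hU]
    rfl
  have hcs : ∑ j, |θ j| ≤ √(∑ j, lam j) * √(∑ i, β i ^ 2) :=
    calc ∑ j, |θ j| = ∑ j, √(lam j) * |(Uᵀ *ᵥ β) j| := by
          simp only [θ, abs_mul, abs_of_nonneg (Real.sqrt_nonneg _)]
      _ ≤ √(∑ j, √(lam j) ^ 2) * √(∑ j, |(Uᵀ *ᵥ β) j| ^ 2) := Real.sum_mul_le_sqrt_mul_sqrt _ _ _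
      _ ≤ √(∑ j, lam j) * √(∑ i, β i ^ 2) := by
          simp only [Real.sq_sqrt (hlam _).le, sq_abs]
          gcongr
          exact sum_sq_transpose_mulVec_le hU β
  rw [hS, dotProduct_conj_diagonal_mulVec, hcoord]
  calc ∑ j, lam j * ((√(lam j))⁻¹ *
          soft τ ((√(lam j))⁻¹ * (Uᵀ *ᵥ (Xᵀ *ᵥ (X *ᵥ β + e))) j / c) - (Uᵀ *ᵥ β) j) ^ 2
      = ∑ j, (soft τ (θ j + (whitenedColumn X U c lam j ⬝ᵥ e) / √c) - θ j) ^ 2 := by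
        refine sum_congr rfl fun j _ => ?_
        rw [mul_sq_inv_sqrt_mul_sub (hlam j), nct_statistic_eq hU hc hS (hlam j)]
    _ ≤ ∑ j, 4 * τ * |θ j| := by
        refine sum_le_sum fun j _ => sq_soft_sub_le hτ ?_
        rw [add_sub_cancel_left, abs_div, abs_of_pos (Real.sqrt_pos.2 hc),
          div_le_iff₀ (Real.sqrt_pos.2 hc)]
        exact he j
    _ ≤ 4 * τ * (√(∑ j, lam j) * √(∑ i, β i ^ 2)) := by
        rw [← mul_sum]
        gcongr

end CanonicalCoordinates

lemma ofReal_one_sub_le_measure_compl_iUnion {Ω ι : Type*} [MeasurableSpace Ω] {P : Measure Ω}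
    [IsProbabilityMeasure P] [Fintype ι] {A : ι → Set Ω} {δ : ℝ} (hδ : 0 ≤ δ)
    (hA : ∀ i, P (A i) ≤ ENNReal.ofReal (δ / Fintype.card ι)) :
    ENNReal.ofReal (1 - δ) ≤ P (⋃ i, A i)ᶜ := by
  have hunion : P (⋃ i, A i) ≤ ENNReal.ofReal δ :=
    calc P (⋃ i, A i) ≤ ∑ i, P (A i) := measure_iUnion_fintype_le P A
      _ ≤ ∑ _i : ι, ENNReal.ofReal (δ / Fintype.card ι) := sum_le_sum fun i _ => hA i
      _ = ENNReal.ofReal (Fintype.card ι * (δ / Fintype.card ι)) := by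
        rw [sum_const, card_univ, nsmul_eq_mul, ENNReal.ofReal_mul (Nat.cast_nonneg _),
          ENNReal.ofReal_natCast]
      _ ≤ ENNReal.ofReal δ := by
        refine ENNReal.ofReal_le_ofReal ?_
        rcases (Fintype.card ι).eq_zero_or_pos with h | h
        · simp [h, hδ]
        · rw [mul_div_cancel₀ _ (by positivity)]
  rw [ENNReal.ofReal_sub 1 hδ, ENNReal.ofReal_one, tsub_le_iff_right, ← measure_univ (μ := P),
    add_comm]
  exact (measure_univ_le_add_compl _).trans (add_le_add_left hunion _)

lemma two_mul_exp_neg_rpow_le {α δ r : ℝ} (hα : 0 < α) (hδ : 0 < δ) (hr : 0 < r)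
    (hL : 0 ≤ Real.log (2 * r / δ)) :
    2 * Real.exp (-(2 * Real.log (2 * r / δ) ^ (1 / α)) ^ α) ≤ δ / r := by
  set L := Real.log (2 * r / δ)
  have hpow : (2 * L ^ (1 / α)) ^ α = 2 ^ α * L := by
    rw [Real.mul_rpow zero_le_two (Real.rpow_nonneg hL _), ← Real.rpow_mul hL,
      one_div_mul_cancel hα.ne', Real.rpow_one]
  have hL_le : L ≤ (2 * L ^ (1 / α)) ^ α := by
    rw [hpow]
    exact le_mul_of_one_le_left hL (Real.one_le_rpow one_le_two hα.le)
  calc 2 * Real.exp (-(2 * L ^ (1 / α)) ^ α) ≤ 2 * Real.exp (-L) := by gcongr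
    _ = δ / r := by
      rw [Real.exp_neg, Real.exp_log (by positivity), inv_div]
      field_simp

lemma sqrt_mul_sqrt_div_mul_rpow_div {l T L α n : ℝ} (hl : 0 < l) (hT : 0 ≤ T) (hL : 0 ≤ L) :
    √l * √(T / l * L ^ (2 / α) / n) = √T * L ^ (1 / α) / √n := by
  have hsq : L ^ (2 / α) = (L ^ (1 / α)) ^ 2 := by
    rw [← Real.rpow_natCast, ← Real.rpow_mul hL]
    ring_nf
  rw [hsq, Real.sqrt_div (by positivity), Real.sqrt_mul (div_nonneg hT hl.le),
    Real.sqrt_sq (Real.rpow_nonneg hL _), ← mul_div_assoc, ← mul_assoc, ← Real.sqrt_mul hl.le,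
    mul_div_cancel₀ _ hl.ne']

/-- effective-rank bound, display (8): there is an absolute constant `C` such
that for any fixed design linear model with sub-Weibull noise, the NCT estimator with
threshold `τ = σρ`, `ρ = (2/√n)(log(2r/δ))^{1/α}`, satisfies with probability `≥ 1 − δ`
`MSE(β̂) ≤ C σ ‖Σ̂‖^{1/2} ‖β‖₂ √( r_eff[Σ̂] (log(2r/δ))^{2/α} / n )`, where
`r_eff[Σ̂] = Tr(Σ̂)/‖Σ̂‖` and `‖Σ̂‖ = λ̂₁` is the spectral norm. -/
theorem stmt_2 :
    ∃ C : ℝ, 0 < C ∧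
      ∀ (Ω : Type) (_ : MeasurableSpace Ω) (P : Measure Ω) (_ : IsProbabilityMeasure P)
        (n d r : ℕ) (_hn : 0 < n) (hr : 0 < r)
        (X : Matrix (Fin n) (Fin d) ℝ) (β : Fin d → ℝ)
        (U : Matrix (Fin d) (Fin r) ℝ) (lam : Fin r → ℝ),
        Uᵀ * U = 1 →
        (∀ j, 0 < lam j) →
        (∀ j k : Fin r, j ≤ k → lam k ≤ lam j) →
        (n : ℝ)⁻¹ • (Xᵀ * X) = U * Matrix.diagonal lam * Uᵀ →
        ∀ (ε : Ω → Fin n → ℝ), Measurable ε →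
        ∀ (σ α : ℝ), 0 < σ → α ∈ Set.Ioc (0:ℝ) 2 →
        (∀ w : Fin n → ℝ, ∑ i, (w i) ^ 2 = 1 → ∀ t : ℝ, 0 < t →
          P {ω | t ≤ |∑ i, w i * ε ω i|} ≤ ENNReal.ofReal (2 * Real.exp (-((t / σ) ^ α)))) →
        ∀ δ : ℝ, δ ∈ Set.Ioo (0:ℝ) 1 →
        (let ρ : ℝ := 2 / Real.sqrt n * Real.log (2 * r / δ) ^ (1 / α)
         let bhat : Ω → Fin d → ℝ := fun ω => U.mulVec fun j =>
           (Real.sqrt (lam j))⁻¹ * soft (σ * ρ)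
             ((Real.sqrt (lam j))⁻¹ * (Uᵀ.mulVec (Xᵀ.mulVec (X.mulVec β + ε ω))) j / n)
         let MSE : (Fin d → ℝ) → ℝ := fun b =>
           (b - β) ⬝ᵥ (((n : ℝ)⁻¹ • (Xᵀ * X)).mulVec (b - β))
         let reff : ℝ := Matrix.trace ((n : ℝ)⁻¹ • (Xᵀ * X)) / lam ⟨0, hr⟩
         ENNReal.ofReal (1 - δ) ≤
           P {ω | MSE (bhat ω) ≤
             C * σ * Real.sqrt (lam ⟨0, hr⟩) * Real.sqrt (∑ i, (β i) ^ 2) *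
               Real.sqrt (reff * Real.log (2 * r / δ) ^ (2 / α) / n)}) := by
  refine ⟨8, by norm_num, ?_⟩
  intro Ω _ P _ n d r hn hr X β U lam hU hlam _ hS ε _ σ α hσ hα htail δ hδ ρ bhat MSE reff
  have hn' : (0 : ℝ) < n := Nat.cast_pos.2 hn
  set L := Real.log (2 * r / δ)
  have hL : 0 < L := Real.log_pos <| by
    rw [lt_div_iff₀ hδ.1]
    linarith [hδ.2, (Nat.one_le_cast (α := ℝ)).2 hr]
  have hτ : σ * ρ * √n = σ * (2 * L ^ (1 / α)) := by
    simp only [ρ, L]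
    field_simp
  set Bad : Fin r → Set Ω := fun j =>
    {ω | σ * (2 * L ^ (1 / α)) ≤ |∑ i, whitenedColumn X U n lam j i * ε ω i|}
  have hBad : ∀ j, P (Bad j) ≤ ENNReal.ofReal (δ / Fintype.card (Fin r)) := fun j =>
    (htail _ (sum_whitenedColumn_sq hU hn' hS (hlam j)) _ (by positivity)).trans <|
      ENNReal.ofReal_le_ofReal <| by
        rw [Fintype.card_fin, mul_div_cancel_left₀ _ hσ.ne']
        exact two_mul_exp_neg_rpow_le hα.1 hδ.1 (by positivity) hL.le
  have hgood : (⋃ j, Bad j)ᶜ ⊆ {ω | MSE (bhat ω) ≤ 8 * σ * √(lam ⟨0, hr⟩) * √(∑ i, β i ^ 2) *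
      √(reff * L ^ (2 / α) / n)} := by
    intro ω hω
    simp only [Set.mem_compl_iff, Set.mem_iUnion, not_exists, Bad] at hω
    refine (mse_nctEstimator_le hU hn' hlam hS (by positivity) fun j => ?_).trans_eq ?_
    · rw [hτ]
      exact (not_le.1 (hω j)).le
    · simp only [reff, ρ, hS, trace_conj_diagonal hU]
      rw [mul_right_comm _ √(lam ⟨0, hr⟩), mul_assoc _ √(lam ⟨0, hr⟩),
        sqrt_mul_sqrt_div_mul_rpow_div (hlam _) (sum_nonneg fun j _ => (hlam j).le) hL.le]
      ring
  exact (ofReal_one_sub_le_measure_compl_iUnion hδ.1.le hBad).trans (measure_mono hgood)
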